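/- arXiv:2310.13148 — 6 statements merged into one kernel-verified Lean document; each statement's English description precedes it below -/
import Mathlib

section
/- Suppose θ is uniform on [θ̲, 1] with θ̲ < 0 and the proposer has quadratic loss. For a binary cutoff experiment with cutoff s ∈ [max{θ̲,-1}, 0] revealing whether θ ≥ s, the proposer's expected payoff -(s - θ̲)/(1 - θ̲) - (1 - s)s²/(1 - θ̲) is maximized at s* = max{θ̲, -1/3}; in particular if θ̲ < -1/3 the optimal cutoff is -1/3 and the resulting payoff is -(-5/27 - θ̲)/(1 - θ̲) = (5/27 + θ̲)/(1 - θ̲). -/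
open Set

/-- Uniform `[θ̲,1]`, `θ̲ < 0`, quadratic proposer loss. The binary cutoff-experiment payoff
`g(s) = -(s-θ̲)/(1-θ̲) - (1-s)s²/(1-θ̲)` is maximized on `[max{θ̲,-1}, 0]` at
`s* = max{θ̲, -1/3}`; if `θ̲ < -1/3` the optimal cutoff is `-1/3` with payoff
`-(-5/27 - θ̲)/(1-θ̲)`. -/
theorem optimal_binary_cutoff_uniform
    (θl : ℝ) (h2 : θl < 0) :
    IsMaxOn (fun s : ℝ => -(s - θl) / (1 - θl) - (1 - s) * s ^ 2 / (1 - θl))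
        (Icc (max θl (-1)) 0) (max θl (-1 / 3)) ∧
      (θl < -1 / 3 →
        -((-1 / 3 : ℝ) - θl) / (1 - θl) - (1 - (-1 / 3)) * (-1 / 3 : ℝ) ^ 2 / (1 - θl)
          = -(-5 / 27 - θl) / (1 - θl)) := by
  have hc : (0:ℝ) < 1 - θl := by linarith
  constructor
  · rw [isMaxOn_iff]
    intro s hs
    simp only [mem_Icc] at hs
    obtain ⟨hs1, hs2⟩ := hs
    have hs1' : -1 ≤ s := le_trans (le_max_right _ _) hs1
    rw [div_sub_div_same, div_sub_div_same, div_le_div_iff_of_pos_right hc]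
    rcases le_or_gt θl (-1/3) with h | h
    · rw [max_eq_right h]
      nlinarith [mul_nonneg (sq_nonneg (s + 1/3)) (by linarith : (0:ℝ) ≤ 5/3 - s)]
    · rw [max_eq_left h.le]
      have hθs : θl ≤ s := le_trans (le_max_left _ _) hs1
      nlinarith [mul_nonneg (sub_nonneg.2 hθs) (by nlinarith : (0:ℝ) ≤ 1 + θl + s - θl^2 - θl*s - s^2)]
  · intro _
    ring
end

section
/- Consider the functions U_BI(θ̲) = -(-5/27 - θ̲)/(1 - θ̲) for θ̲ < -1/3 and U_BI(θ̲) = -θ̲² for θ̲ ≥ -1/3, U_NO(θ̲) = -min{θ̲², 1}, U_FL1(θ̲) = -(11 - 27θ̲)/(27(1 - θ̲)), and U_FL2(θ̲) = -(1/6 - θ̲)/(1 - θ̲). Then for all θ̲ ∈ [-2, 0), U_BI(θ̲) ≥ max{U_NO(θ̲), U_FL1(θ̲), U_FL2(θ̲)}. -/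
open Set

/-- The optimal binary experiment payoff dominates no information and both
full-information regimes for all `θ̲ ∈ [-2, 0)`. -/
theorem binary_dominates
    (θl : ℝ) (h1 : θl ∈ Ico (-2 : ℝ) 0) :
    (if θl < -1 / 3 then -(-5 / 27 - θl) / (1 - θl) else -θl ^ 2) ≥
      max (-(min (θl ^ 2) 1))
        (max (-(11 - 27 * θl) / (27 * (1 - θl))) (-(1 / 6 - θl) / (1 - θl))) := by
  obtain ⟨h2, h3⟩ := h1
  have hd : (0:ℝ) < 1 - θl := by linarith
  rw [ge_iff_le, max_le_iff, max_le_iff]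
  split_ifs with hc
  · refine ⟨?_, ?_, ?_⟩
    · rcases le_total (θl ^ 2) 1 with h | h
      · rw [min_eq_left h, le_div_iff₀ hd]
        nlinarith [sq_nonneg (θl + 1/3), mul_nonneg (sq_nonneg (θl + 1/3)) (le_of_lt (show (0:ℝ) < 5/3 - θl by linarith))]
      · rw [min_eq_right h]
        rw [le_div_iff₀ hd]
        nlinarith
    · rw [div_le_div_iff₀ (by linarith) hd]
      nlinarith
    · rw [div_le_div_iff₀ hd hd]
      nlinarith
  · push_neg at hc
    refine ⟨?_, ?_, ?_⟩
    · have h : θl ^ 2 ≤ 1 := by nlinarith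
      rw [min_eq_left h]
    · rw [div_le_iff₀ (by linarith)]
      nlinarith
    · rw [div_le_iff₀ hd]
      nlinarith
end

section
/- In the uniform-[θ̲,1] quadratic-proposer example, U_FL2(θ̲) = -(1/6 - θ̲)/(1 - θ̲) ≥ U_FL1(θ̲) = -(11 - 27θ̲)/(27(1 - θ̲)) for all θ̲ < 0, i.e., full information with persuasion-first weakly dominates full information with proposal-first. -/
/-- Full information with persuasion-first weakly dominates full information with
proposal-first in the uniform quadratic-proposer example: for all `θ̲ < 0`,
`-(1/6 - θ̲)/(1-θ̲) ≥ -(11 - 27θ̲)/(27(1-θ̲))`. -/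
theorem persuasion_first_dominates_proposal_first
    (θl : ℝ) (h : θl < 0) :
    -(1 / 6 - θl) / (1 - θl) ≥ -(11 - 27 * θl) / (27 * (1 - θl)) := by
  have h1 : (0:ℝ) < 1 - θl := by linarith
  rw [ge_iff_le, div_le_div_iff₀ (by positivity) h1]
  nlinarith
end

section
/- In the uniform-[θ̲,1] quadratic-proposer example, there exists a unique θ̲* ∈ (-1, 0) such that U_NO(θ̲) = -θ̲² < U_FL2(θ̲) = -(1/6 - θ̲)/(1 - θ̲) for θ̲ < θ̲* and U_NO(θ̲) > U_FL2(θ̲) for θ̲* < θ̲ < 0; that is, U_NO crosses U_FL2 exactly once from below on (-1,0). -/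
open Set

lemma cube_iff_lt (x : ℝ) (hx : x < 1) :
    (-x ^ 2 < -(1 / 6 - x) / (1 - x)) ↔ x ^ 3 - x ^ 2 - x + 1 / 6 < 0 := by
  rw [lt_div_iff₀ (by linarith : (0:ℝ) < 1 - x)]
  constructor <;> intro h <;> nlinarith

lemma cube_iff_gt (x : ℝ) (hx : x < 1) :
    (-x ^ 2 > -(1 / 6 - x) / (1 - x)) ↔ x ^ 3 - x ^ 2 - x + 1 / 6 > 0 := by
  rw [gt_iff_lt, div_lt_iff₀ (by linarith : (0:ℝ) < 1 - x)]
  constructor <;> intro h <;> nlinarith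

/-- `U_NO(θ̲) = -θ̲²` crosses `U_FL2(θ̲) = -(1/6-θ̲)/(1-θ̲)` exactly once from below on
`(-1,0)`: there is a unique `θ̲* ∈ (-1,0)` such that `U_NO < U_FL2` to the left of `θ̲*`
and `U_NO > U_FL2` to the right, within `(-1,0)`. -/
theorem UNO_crosses_UFL2_once :
    ∃! θs : ℝ, θs ∈ Ioo (-1 : ℝ) 0 ∧
      (∀ x ∈ Ioo (-1 : ℝ) 0, x < θs → -x ^ 2 < -(1 / 6 - x) / (1 - x)) ∧
      (∀ x ∈ Ioo (-1 : ℝ) 0, θs < x → -x ^ 2 > -(1 / 6 - x) / (1 - x)) := by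
  have hc : ContinuousOn (fun x : ℝ => x ^ 3 - x ^ 2 - x + 1 / 6)
      (Icc (-1 : ℝ) (-1/3)) := by fun_prop
  have hmem : (0:ℝ) ∈ Ioo ((fun x : ℝ => x ^ 3 - x ^ 2 - x + 1 / 6) (-1))
      ((fun x : ℝ => x ^ 3 - x ^ 2 - x + 1 / 6) (-1/3)) := by
    norm_num
  obtain ⟨θs, hθmem, hf0⟩ :=
    intermediate_value_Ioo (by norm_num : (-1:ℝ) ≤ -1/3) hc hmem
  simp only at hf0
  obtain ⟨h1, h2⟩ := hθmem
  have hθ0 : θs < 0 := by linarith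
  refine ⟨θs, ⟨⟨h1, hθ0⟩, ?_, ?_⟩, ?_⟩
  · intro x hx hlt
    rw [cube_iff_lt x (by linarith [hx.2])]
    nlinarith [hx.1, sq_nonneg (x + θs), sq_nonneg (x - θs), mul_pos (neg_pos.2 hx.2) (neg_pos.2 hθ0)]
  · intro x hx hgt
    rw [cube_iff_gt x (by linarith [hx.2])]
    rcases le_or_gt x (-1/3) with hle | hlt'
    · nlinarith [hx.1, sq_nonneg (x + θs), sq_nonneg (x - θs), mul_pos (neg_pos.2 hx.2) (neg_pos.2 hθ0)]
    · nlinarith [hx.2, sq_nonneg x, sq_nonneg (x + 1/3)]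
  · rintro y ⟨hy, hyl, hyr⟩
    by_contra hne
    rcases lt_or_gt_of_ne hne with hlt | hgt
    · -- y < θs, take x between
      set x := (y + θs) / 2 with hxdef
      have hx : x ∈ Ioo (-1:ℝ) 0 := ⟨by simp [hxdef]; linarith [hy.1], by simp [hxdef]; linarith [hy.2]⟩
      have hA := hyr x hx (by simp [hxdef]; linarith)
      have hB : -x ^ 2 < -(1 / 6 - x) / (1 - x) := by
        rw [cube_iff_lt x (by linarith [hx.2])]
        nlinarith [hx.1, sq_nonneg (x + θs), sq_nonneg (x - θs),
          mul_pos (neg_pos.2 hx.2) (neg_pos.2 hθ0), show x < θs by simp [hxdef]; linarith]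
      linarith
    · set x := (θs + y) / 2 with hxdef
      have hx : x ∈ Ioo (-1:ℝ) 0 := ⟨by simp [hxdef]; linarith [hy.2], by simp [hxdef]; linarith [hy.2]⟩
      have hA := hyl x hx (by simp [hxdef]; linarith)
      have hxgt : θs < x := by simp [hxdef]; linarith
      have hB : -x ^ 2 > -(1 / 6 - x) / (1 - x) := by
        rw [cube_iff_gt x (by linarith [hx.2])]
        rcases le_or_gt x (-1/3) with hle | hlt'
        · nlinarith [hx.1, sq_nonneg (x + θs), sq_nonneg (x - θs), mul_pos (neg_pos.2 hx.2) (neg_pos.2 hθ0)]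
        · nlinarith [hx.2, sq_nonneg x, sq_nonneg (x + 1/3)]
      linarith
end

section
/- Let c: [0,1] → ℝ be twice continuously differentiable, strictly increasing, convex, with c(0) = 0, and set u(a) = -c(1-a). For the optimal interior cutoff equation 2u'(2t)(t - s) = u(2t) - u(0), with t = E[θ|θ ≥ s], the solution in the quadratic case c(x) = x² with θ uniform on [θ̲, θ̄] (so t = (s+θ̄)/2) has unique negative root s = κ(θ̄) = -θ̄²/(2 - θ̄ + 2√(1 - θ̄ + θ̄²)). -/
/-!
Since `u'(a) = 2(1 - a)`, the cutoff equation with `t = (s + θ̄)/2` is the quadratic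
`3s² + 2(θ̄ - 2)s - θ̄² = 0`, whose roots have product `-θ̄²/3 < 0`. With `R = √(1 - θ̄ + θ̄²)`
the positive root is `D/3` for `D = 2 - θ̄ + 2R` (positive since `4R² - (2 - θ̄)² = 3θ̄²` gives `2R ≥ |2 - θ̄|`),
so the negative root is `-θ̄²/D = κ(θ̄)`.
-/

noncomputable def kappa (θ : ℝ) : ℝ := -θ ^ 2 / (2 - θ + 2 * √(1 - θ + θ ^ 2))

theorem deriv_neg_one_sub_sq (x : ℝ) : deriv (fun a : ℝ => -(1 - a) ^ 2) x = 2 * (1 - x) := by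
  have h : HasDerivAt (fun a : ℝ => -(1 - a) ^ 2) (-((2 : ℕ) * (1 - x) ^ (2 - 1) * (-1))) x :=
    (((hasDerivAt_id x).const_sub 1).pow 2).neg
  rw [h.deriv]
  ring

theorem cutoff_equation_iff_quadratic (θ s : ℝ) :
    2 * (2 * (1 - 2 * ((s + θ) / 2))) * ((s + θ) / 2 - s) =
        -(1 - 2 * ((s + θ) / 2)) ^ 2 - -(1 - 0) ^ 2 ↔
      3 * s ^ 2 + 2 * (θ - 2) * s - θ ^ 2 = 0 := by
  constructor <;> intro h <;> linear_combination h

theorem one_sub_add_sq_pos (θ : ℝ) : 0 < 1 - θ + θ ^ 2 := by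
  nlinarith [sq_nonneg (θ - 1 / 2)]

theorem two_sub_add_two_mul_sqrt_pos (θ : ℝ) :
    0 < 2 - θ + 2 * √(1 - θ + θ ^ 2) := by
  have hR := Real.sq_sqrt (one_sub_add_sq_pos θ).le
  have hR0 := Real.sqrt_nonneg (1 - θ + θ ^ 2)
  nlinarith [sq_nonneg θ]

theorem kappa_neg {θ : ℝ} (hθ : θ ≠ 0) : kappa θ < 0 :=
  div_neg_of_neg_of_pos (by nlinarith [sq_pos_of_ne_zero hθ]) (two_sub_add_two_mul_sqrt_pos θ)

theorem cutoff_quadratic_eq_mul (θ s : ℝ) :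
    3 * s ^ 2 + 2 * (θ - 2) * s - θ ^ 2 =
      (s - kappa θ) * (3 * s - (2 - θ + 2 * √(1 - θ + θ ^ 2))) := by
  have hR := Real.sq_sqrt (one_sub_add_sq_pos θ).le
  have hD := (two_sub_add_two_mul_sqrt_pos θ).ne'
  rw [kappa]
  field_simp
  linear_combination (4 * s) * hR

theorem cutoff_equation_unique_negative_root_general
    (θh : ℝ) (h1 : 0 < θh) :
    (-θh ^ 2 / (2 - θh + 2 * Real.sqrt (1 - θh + θh ^ 2)) < 0) ∧
      ∀ s : ℝ, s < 0 →
        ((2 * deriv (fun a : ℝ => -(1 - a) ^ 2) (2 * ((s + θh) / 2)) *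
              ((s + θh) / 2 - s) =
            (fun a : ℝ => -(1 - a) ^ 2) (2 * ((s + θh) / 2)) -
              (fun a : ℝ => -(1 - a) ^ 2) 0) ↔
          s = -θh ^ 2 / (2 - θh + 2 * Real.sqrt (1 - θh + θh ^ 2))) := by
  have hθ : θh ≠ 0 := h1.ne'
  refine ⟨kappa_neg hθ, fun s hs => ?_⟩
  simp only [deriv_neg_one_sub_sq]
  rw [cutoff_equation_iff_quadratic, cutoff_quadratic_eq_mul, mul_eq_zero, ← kappa, sub_eq_zero]
  have hD := two_sub_add_two_mul_sqrt_pos θh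
  exact or_iff_left (by linarith)

/-- In the quadratic case `c(x) = x²` (`u(a) = -(1-a)²`) with `θ` uniform on `[θ̲,θ̄]`
(so `t = E[θ|θ≥s] = (s+θ̄)/2`), the cutoff equation `2u'(2t)(t-s) = u(2t) - u(0)` has a
unique negative root, namely `s = κ(θ̄) = -θ̄²/(2 - θ̄ + 2√(1 - θ̄ + θ̄²))`. -/
theorem cutoff_equation_unique_negative_root
    (θh : ℝ) (h1 : 0 < θh) (h2 : θh ≤ 1) :
    (-θh ^ 2 / (2 - θh + 2 * Real.sqrt (1 - θh + θh ^ 2)) < 0) ∧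
      ∀ s : ℝ, s < 0 →
        ((2 * deriv (fun a : ℝ => -(1 - a) ^ 2) (2 * ((s + θh) / 2)) *
              ((s + θh) / 2 - s) =
            (fun a : ℝ => -(1 - a) ^ 2) (2 * ((s + θh) / 2)) -
              (fun a : ℝ => -(1 - a) ^ 2) 0) ↔
          s = -θh ^ 2 / (2 - θh + 2 * Real.sqrt (1 - θh + θh ^ 2))) :=
  cutoff_equation_unique_negative_root_general θh h1
end

section
/- Let u₁, u₂: [0,1] → ℝ be twice differentiable, strictly increasing, with -u₁''(a)/u₁'(a) ≤ -u₂''(a)/u₂'(a) for all a ∈ [0,1]. Then for every a ∈ [0,1], (u₁(a) - u₁(0))/u₁'(a) ≤ (u₂(a) - u₂(0))/u₂'(a). -/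
/-! Since `(u₁' / u₂')' = (u₁' / u₂') (u₁'' / u₁' - u₂'' / u₂')`, a higher coefficient of
absolute risk aversion for `u₂` makes the ratio `u₁' / u₂'` increasing, so
`u₁' t * u₂' a ≤ u₂' t * u₁' a` for `t ≤ a`. Integrating this over `t ∈ [0, a]` gives
`(u₁ a - u₁ 0) * u₂' a ≤ (u₂ a - u₂ 0) * u₁' a`. -/

open Set

theorem monotoneOn_div_of_div_le_div {f g f' g' : ℝ → ℝ} {s : Set ℝ} (hs : Convex ℝ s)
    (hf : ∀ x ∈ s, HasDerivAt f (f' x) x) (hg : ∀ x ∈ s, HasDerivAt g (g' x) x)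
    (hf₀ : ∀ x ∈ s, 0 < f x) (hg₀ : ∀ x ∈ s, 0 < g x)
    (h : ∀ x ∈ s, g' x / g x ≤ f' x / f x) :
    MonotoneOn (fun x => f x / g x) s := by
  have hquot : ∀ x ∈ s, HasDerivAt (fun x => f x / g x)
      ((f' x * g x - f x * g' x) / g x ^ 2) x :=
    fun x hx => (hf x hx).div (hg x hx) (hg₀ x hx).ne'
  refine monotoneOn_of_hasDerivWithinAt_nonneg hs
    (fun x hx => (hquot x hx).continuousAt.continuousWithinAt)
    (fun x hx => (hquot x (interior_subset hx)).hasDerivWithinAt) fun x hx => ?_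
  have hx := interior_subset hx
  have hcross := (div_le_div_iff₀ (hg₀ x hx) (hf₀ x hx)).mp (h x hx)
  exact div_nonneg (by linarith) (sq_nonneg _)

theorem sub_div_le_sub_div_of_mul_le_mul {u₁ u₂ v₁ v₂ : ℝ → ℝ} {b a : ℝ} (hba : b ≤ a)
    (hu₁ : ∀ t ∈ Icc b a, HasDerivAt u₁ (v₁ t) t) (hu₂ : ∀ t ∈ Icc b a, HasDerivAt u₂ (v₂ t) t)
    (hv₁ : ContinuousOn v₁ (Icc b a)) (hv₂ : ContinuousOn v₂ (Icc b a))
    (hv₁a : 0 < v₁ a) (hv₂a : 0 < v₂ a)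
    (hle : ∀ t ∈ Icc b a, v₁ t * v₂ a ≤ v₂ t * v₁ a) :
    (u₁ a - u₁ b) / v₁ a ≤ (u₂ a - u₂ b) / v₂ a := by
  rw [← uIcc_of_le hba] at hu₁ hu₂ hv₁ hv₂
  have hi₁ : IntervalIntegrable v₁ MeasureTheory.volume b a := hv₁.intervalIntegrable
  have hi₂ : IntervalIntegrable v₂ MeasureTheory.volume b a := hv₂.intervalIntegrable
  rw [div_le_div_iff₀ hv₁a hv₂a, ← intervalIntegral.integral_eq_sub_of_hasDerivAt hu₁ hi₁,
    ← intervalIntegral.integral_eq_sub_of_hasDerivAt hu₂ hi₂,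
    ← intervalIntegral.integral_mul_const, ← intervalIntegral.integral_mul_const]
  exact intervalIntegral.integral_mono_on hba (hi₁.mul_const _) (hi₂.mul_const _) hle

/-- If `u₂` is more risk averse than `u₁` (pointwise higher coefficient of absolute risk
aversion) on `[0,1]`, then `(u₁(a)-u₁(0))/u₁'(a) ≤ (u₂(a)-u₂(0))/u₂'(a)` on `[0,1]`. -/
theorem risk_aversion_normalized_gain
    (u₁ u₂ : ℝ → ℝ)
    (hd₁ : ∀ a ∈ Icc (0 : ℝ) 1, DifferentiableAt ℝ u₁ a)
    (hd₂ : ∀ a ∈ Icc (0 : ℝ) 1, DifferentiableAt ℝ u₂ a)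
    (hdd₁ : ∀ a ∈ Icc (0 : ℝ) 1, DifferentiableAt ℝ (deriv u₁) a)
    (hdd₂ : ∀ a ∈ Icc (0 : ℝ) 1, DifferentiableAt ℝ (deriv u₂) a)
    (hpos₁ : ∀ a ∈ Icc (0 : ℝ) 1, 0 < deriv u₁ a)
    (hpos₂ : ∀ a ∈ Icc (0 : ℝ) 1, 0 < deriv u₂ a)
    (hara : ∀ a ∈ Icc (0 : ℝ) 1,
      -(deriv (deriv u₁) a) / deriv u₁ a ≤ -(deriv (deriv u₂) a) / deriv u₂ a) :
    ∀ a ∈ Icc (0 : ℝ) 1,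
      (u₁ a - u₁ 0) / deriv u₁ a ≤ (u₂ a - u₂ 0) / deriv u₂ a := by
  intro a ha
  have hsub : Icc 0 a ⊆ Icc (0 : ℝ) 1 := Icc_subset_Icc_right ha.2
  have hratio : MonotoneOn (fun t => deriv u₁ t / deriv u₂ t) (Icc 0 1) :=
    monotoneOn_div_of_div_le_div (convex_Icc 0 1) (fun t ht => (hdd₁ t ht).hasDerivAt)
      (fun t ht => (hdd₂ t ht).hasDerivAt) hpos₁ hpos₂ fun t ht => by
        simpa only [neg_div, neg_le_neg_iff] using hara t ht
  have hcross : ∀ t ∈ Icc 0 a, deriv u₁ t * deriv u₂ a ≤ deriv u₂ t * deriv u₁ a := by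
    intro t ht
    have := hratio (hsub ht) ha ht.2
    rwa [div_le_div_iff₀ (hpos₂ t (hsub ht)) (hpos₂ a ha), mul_comm (deriv u₁ a)] at this
  exact sub_div_le_sub_div_of_mul_le_mul ha.1
    (fun t ht => (hd₁ t (hsub ht)).hasDerivAt) (fun t ht => (hd₂ t (hsub ht)).hasDerivAt)
    (fun t ht => (hdd₁ t (hsub ht)).continuousAt.continuousWithinAt)
    (fun t ht => (hdd₂ t (hsub ht)).continuousAt.continuousWithinAt)
    (hpos₁ a ha) (hpos₂ a ha) hcross
end
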